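/- arXiv:1201.2116 — 3 statements merged into one kernel-verified Lean document; each statement's English description precedes it below -/
import Mathlib

section
/- Let p and q be prime numbers with p < q, let N = p*q, and let K = ⌊√N⌋ (the integer square root of N). Then gcd(K!, N) = p. -/
/-!
Since `p < q`, we have `p * p ≤ p * q < q * q`, so `p ≤ K < q` for `K = ⌊√(p * q)⌋`.
Hence the prime `p` divides `K!` while the prime `q` does not, and `gcd(K!, p * q) = p`.
-/

namespace Nat

theorem le_sqrt_mul_of_le {a b : ℕ} (h : a ≤ b) : a ≤ sqrt (a * b) :=
  le_sqrt.mpr (Nat.mul_le_mul_left a h)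

theorem sqrt_mul_lt_of_lt {a b : ℕ} (h : a < b) : sqrt (a * b) < b :=
  sqrt_lt.mpr (Nat.mul_lt_mul_of_pos_right h (by omega))

theorem gcd_mul_eq_left_of_dvd_of_coprime {a p q : ℕ} (hp : p ∣ a) (hq : Coprime q a) :
    gcd a (p * q) = p := by
  rw [hq.gcd_mul_right_cancel_right, gcd_eq_right hp]

end Nat

theorem strassen_gcd_factorial (p q : ℕ) (hp : p.Prime) (hq : q.Prime) (hpq : p < q)
    (N : ℕ) (hN : N = p * q) (K : ℕ) (hK : K = Nat.sqrt N) :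
    Nat.gcd (Nat.factorial K) N = p := by
  subst hN hK
  have hp_dvd : p ∣ (Nat.sqrt (p * q)).factorial :=
    Nat.dvd_factorial hp.pos (Nat.le_sqrt_mul_of_le hpq.le)
  have hq_not_dvd : ¬ q ∣ (Nat.sqrt (p * q)).factorial := by
    rw [hq.dvd_factorial, not_le]
    exact Nat.sqrt_mul_lt_of_lt hpq
  exact Nat.gcd_mul_eq_left_of_dvd_of_coprime hp_dvd (hq.coprime_iff_not_dvd.mpr hq_not_dvd)
end

section
/- Let Q and k be positive integers and let ρ = φ(Q) be Euler's totient of Q. Define H(n) = ∏_{1 ≤ j ≤ Q, gcd(j,Q)=1} (Q·n + j) and H_k(n) = H(n)·H(n+1)···H(n+k−1) for natural numbers n. Then ∏_{i=0}^{kρ−1} H_k(i·k) = ∏_{1 ≤ j ≤ k^2·ρ·Q, gcd(j,Q)=1} j. -/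
/-! Cut `[1, k²ρQ]` into `k²ρ` consecutive blocks `Q n + [1, Q]`; since `gcd (Q n + j) Q = gcd j Q`,
the block `n` contributes exactly `H n`, and grouping the blocks `k` at a time gives the `H_k (i k)`. -/

open Finset

namespace Finset

variable {M : Type*} [CommMonoid M]

theorem prod_range_mul_eq_prod_prod (f : ℕ → M) (a k : ℕ) :
    ∏ n ∈ range (a * k), f n = ∏ i ∈ range a, ∏ m ∈ range k, f (i * k + m) := by
  induction a with
  | zero => simp
  | succ a ih => rw [Nat.succ_mul, prod_range_add, ih, prod_range_succ]

theorem prod_Icc_one_eq_prod_range (f : ℕ → M) (n : ℕ) :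
    ∏ j ∈ Icc 1 n, f j = ∏ m ∈ range n, f (m + 1) := by
  induction n with
  | zero => simp
  | succ n ih => rw [prod_Icc_succ_top (Nat.le_add_left 1 n), ih, prod_range_succ]

end Finset

theorem prod_filter_coprime_Icc_mul (Q N : ℕ) :
    ∏ j ∈ (Icc 1 (N * Q)).filter (fun j => Nat.gcd j Q = 1), j =
      ∏ n ∈ range N, ∏ j ∈ (Icc 1 Q).filter (fun j => Nat.gcd j Q = 1), (Q * n + j) := by
  simp only [prod_filter, prod_Icc_one_eq_prod_range, prod_range_mul_eq_prod_prod]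
  refine prod_congr rfl fun n _ => prod_congr rfl fun r _ => ?_
  simp only [show n * Q + r + 1 = Q * n + (r + 1) by ring, Nat.gcd_mul_left_add_left]

theorem key_product_identity_general (Q k : ℕ)
    (ρ : ℕ)
    (H : ℕ → ℕ) (hH : ∀ n, H n = ∏ j ∈ (Finset.Icc 1 Q).filter (fun j => Nat.gcd j Q = 1), (Q * n + j))
    (Hk : ℕ → ℕ) (hHk : ∀ n, Hk n = ∏ m ∈ Finset.range k, H (n + m)) :
    ∏ i ∈ Finset.range (k * ρ), Hk (i * k) =
      ∏ j ∈ (Finset.Icc 1 (k ^ 2 * ρ * Q)).filter (fun j => Nat.gcd j Q = 1), j := by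
  calc ∏ i ∈ range (k * ρ), Hk (i * k)
      = ∏ n ∈ range (k * ρ * k), H n := by simp only [hHk, prod_range_mul_eq_prod_prod]
    _ = ∏ n ∈ range (k ^ 2 * ρ), H n := by ring_nf
    _ = _ := by simp only [prod_filter_coprime_Icc_mul, hH]

theorem key_product_identity (Q k : ℕ) (hQ : 0 < Q) (hk : 0 < k)
    (ρ : ℕ) (hρ : ρ = Nat.totient Q)
    (H : ℕ → ℕ) (hH : ∀ n, H n = ∏ j ∈ (Finset.Icc 1 Q).filter (fun j => Nat.gcd j Q = 1), (Q * n + j))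
    (Hk : ℕ → ℕ) (hHk : ∀ n, Hk n = ∏ m ∈ Finset.range k, H (n + m)) :
    ∏ i ∈ Finset.range (k * ρ), Hk (i * k) =
      ∏ j ∈ (Finset.Icc 1 (k ^ 2 * ρ * Q)).filter (fun j => Nat.gcd j Q = 1), j :=
  key_product_identity_general Q k ρ H hH Hk hHk
end

section
/- Let N, Q, k be positive integers with gcd(N, Q) = 1, let ρ = φ(Q), and set b = k^2·ρ·Q. Define H(n) = ∏_{1 ≤ j ≤ Q, gcd(j,Q)=1} (Q·n + j) and H_k(n) = H(n)·H(n+1)···H(n+k−1). Then N has a prime divisor p with p ≤ b if and only if gcd(∏_{i=0}^{kρ−1} H_k(i·k), N) > 1. -/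
/-!
The blocks `H_k(i k)` for `i < kρ` are exactly `H(0), …, H(k²ρ - 1)`, and the factors
`Q m + j` of these are the integers in `[1, Q k²ρ] = [1, b]` coprime to `Q`.
A prime divides their product iff it is one of these integers, i.e. iff it is at most `b` and
coprime to `Q`; for a prime divisor of `N` the latter is automatic since `gcd(N, Q) = 1`.
-/

open Finset

theorem Finset.prod_range_prod_range_mul {M : Type*} [CommMonoid M] (f : ℕ → M) (n k : ℕ) :
    ∏ i ∈ range n, ∏ m ∈ range k, f (i * k + m) = ∏ m ∈ range (n * k), f m := by
  induction n with
  | zero => simp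
  | succ n ih => rw [prod_range_succ, ih, Nat.succ_mul, prod_range_add]

theorem Nat.one_lt_gcd_iff_exists_prime {a b : ℕ} (ha : a ≠ 0) :
    1 < Nat.gcd a b ↔ ∃ p, p.Prime ∧ p ∣ a ∧ p ∣ b := by
  rw [← Nat.Prime.not_coprime_iff_dvd, Nat.Coprime]
  have : Nat.gcd a b ≠ 0 := fun h => ha (Nat.eq_zero_of_gcd_eq_zero_left h)
  omega

def coprimeResidues (Q : ℕ) : Finset ℕ := (Icc 1 Q).filter (fun j => Nat.gcd j Q = 1)

section CoprimeResidues

variable {Q M : ℕ}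

theorem mem_coprimeResidues {j : ℕ} : j ∈ coprimeResidues Q ↔ (1 ≤ j ∧ j ≤ Q) ∧ j.Coprime Q := by
  rw [coprimeResidues, mem_filter, mem_Icc, Nat.Coprime]

theorem mul_add_le_mul_of_mem_coprimeResidues {m j : ℕ} (hm : m < M)
    (hj : j ∈ coprimeResidues Q) : Q * m + j ≤ Q * M := by
  have hjQ : j ≤ Q := (mem_coprimeResidues.mp hj).1.2
  calc Q * m + j ≤ Q * (m + 1) := by rw [mul_add_one]; omega
    _ ≤ Q * M := Nat.mul_le_mul_left Q hm

theorem exists_eq_mul_add_of_coprime {x : ℕ} (hx : 1 ≤ x) (hxM : x ≤ Q * M) (hxQ : x.Coprime Q) :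
    ∃ m < M, ∃ j ∈ coprimeResidues Q, x = Q * m + j := by
  have hQ : 0 < Q := Nat.pos_of_ne_zero fun h => by rw [h, zero_mul] at hxM; omega
  -- write `x - 1 = Q m + r` with `0 ≤ r < Q` and take `j = r + 1`
  have hdiv := Nat.div_add_mod (x - 1) Q
  have hmod := Nat.mod_lt (x - 1) hQ
  have hx_eq : x = Q * ((x - 1) / Q) + ((x - 1) % Q + 1) := by omega
  refine ⟨(x - 1) / Q, Nat.div_lt_of_lt_mul (by omega), (x - 1) % Q + 1, ?_, hx_eq⟩
  refine mem_coprimeResidues.mpr ⟨⟨by omega, by omega⟩, ?_⟩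
  rwa [Nat.Coprime, ← Nat.gcd_mul_left_add_left, ← hx_eq]

theorem Nat.Prime.dvd_prod_coprimeResidues_iff {p : ℕ} (hp : p.Prime) :
    p ∣ ∏ m ∈ range M, ∏ j ∈ coprimeResidues Q, (Q * m + j) ↔
      p.Coprime Q ∧ p ≤ Q * M := by
  simp only [hp.prime.dvd_finsetProd_iff, mem_range]
  constructor
  · rintro ⟨m, hm, j, hj, hpj⟩
    obtain ⟨⟨hj1, -⟩, hjQ⟩ := mem_coprimeResidues.mp hj
    have hQmj : (Q * m + j).Coprime Q := by rwa [Nat.Coprime, Nat.gcd_mul_left_add_left]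
    exact ⟨hQmj.coprime_dvd_left hpj,
      (Nat.le_of_dvd (by omega) hpj).trans (mul_add_le_mul_of_mem_coprimeResidues hm hj)⟩
  · rintro ⟨hpQ, hpM⟩
    obtain ⟨m, hm, j, hj, rfl⟩ := exists_eq_mul_add_of_coprime hp.one_lt.le hpM hpQ
    exact ⟨m, hm, j, hj, dvd_rfl⟩

theorem prod_coprimeResidues_ne_zero :
    ∏ m ∈ range M, ∏ j ∈ coprimeResidues Q, (Q * m + j) ≠ 0 :=
  prod_ne_zero_iff.mpr fun _ _ => prod_ne_zero_iff.mpr fun j hj => by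
    have := (mem_coprimeResidues.mp hj).1.1
    omega

end CoprimeResidues

theorem core_search_step_correct_general (N Q k : ℕ)
    (hNQ : Nat.gcd N Q = 1) (ρ : ℕ)
    (b : ℕ) (hb : b = k ^ 2 * ρ * Q)
    (H : ℕ → ℕ) (hH : ∀ n, H n = ∏ j ∈ (Finset.Icc 1 Q).filter (fun j => Nat.gcd j Q = 1), (Q * n + j))
    (Hk : ℕ → ℕ) (hHk : ∀ n, Hk n = ∏ m ∈ Finset.range k, H (n + m)) :
    (∃ p, Nat.Prime p ∧ p ∣ N ∧ p ≤ b) ↔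
      1 < Nat.gcd (∏ i ∈ Finset.range (k * ρ), Hk (i * k)) N := by
  have hprod : ∏ i ∈ range (k * ρ), Hk (i * k) = ∏ m ∈ range (k ^ 2 * ρ), H m := by
    simp only [hHk, prod_range_prod_range_mul]
    ring_nf
  have hH' : ∀ n, H n = ∏ j ∈ coprimeResidues Q, (Q * n + j) := hH
  simp only [hprod, hH']
  rw [Nat.one_lt_gcd_iff_exists_prime prod_coprimeResidues_ne_zero]
  refine exists_congr fun p => and_congr_right fun hp => ?_
  rw [hp.dvd_prod_coprimeResidues_iff, hb, mul_comm _ Q]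
  have hpQ : p ∣ N → p.Coprime Q := fun hpN => Nat.Coprime.coprime_dvd_left hpN hNQ
  tauto

theorem core_search_step_correct (N Q k : ℕ) (hN : 0 < N) (hQ : 0 < Q) (hk : 0 < k)
    (hNQ : Nat.gcd N Q = 1) (ρ : ℕ) (hρ : ρ = Nat.totient Q)
    (b : ℕ) (hb : b = k ^ 2 * ρ * Q)
    (H : ℕ → ℕ) (hH : ∀ n, H n = ∏ j ∈ (Finset.Icc 1 Q).filter (fun j => Nat.gcd j Q = 1), (Q * n + j))
    (Hk : ℕ → ℕ) (hHk : ∀ n, Hk n = ∏ m ∈ Finset.range k, H (n + m)) :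
    (∃ p, Nat.Prime p ∧ p ∣ N ∧ p ≤ b) ↔
      1 < Nat.gcd (∏ i ∈ Finset.range (k * ρ), Hk (i * k)) N :=
  core_search_step_correct_general N Q k hNQ ρ b hb H hH Hk hHk
end
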